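/- arXiv:math/0612460 — 3 statements merged into one kernel-verified Lean document; each statement's English description precedes it below -/
import Mathlib

section
/- Let (A, A*) be a tridiagonal pair on V with eigenspace orderings V_0, ..., V_d of A and V*_0, ..., V*_d of A*, with eigenvalues θ*_0, ..., θ*_d of A* and θ_0, ..., θ_d of A, and let τ_i = (λ − θ_0)···(λ − θ_{i−1}). Suppose X = Σ_{i=0}^{d} α_i τ_i(A) with α_0, ..., α_d ∈ K satisfies X V*_0 ⊆ V*_d, and let u ∈ V*_0 be nonzero. Then for 0 ≤ i ≤ d−1: α_i(θ*_i − θ*_d) τ_i(A)u + α_{i+1}(A* − θ*_{i+1} I) τ_{i+1}(A)u = 0. -/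
open Polynomial

/-- A tridiagonal pair on `V`, with eigenspace orderings `Ev 0, ..., Ev d` of `A`
(with eigenvalues `θ 0, ..., θ d`) and `Ew 0, ..., Ew d` of `B = A*`
(with eigenvalues `θ' 0, ..., θ' d`).  For indices `i > d` we set `Ev i = ⊥`,
`Ew i = ⊥`, encoding the conventions `V_{-1} = 0`, `V_{d+1} = 0`
(note `Ev (0 - 1) = Ev 0` by truncated subtraction, which is harmless in the
tridiagonal conditions below since `Ev i` appears in the sum anyway). -/
structure TridiagonalPair (K V : Type*) [Field K] [AddCommGroup V] [Module K V]
    [FiniteDimensional K V] where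
  A : Module.End K V
  B : Module.End K V
  d : ℕ
  Ev : ℕ → Submodule K V
  Ew : ℕ → Submodule K V
  θ : ℕ → K
  θ' : ℕ → K
  hEv_eig : ∀ i ≤ d, Ev i = Module.End.eigenspace A (θ i)
  hEv_ne : ∀ i ≤ d, Ev i ≠ ⊥
  hEv_all : ∀ μ : K, Module.End.eigenspace A μ ≠ ⊥ → ∃ i ≤ d, θ i = μ
  hθ_inj : ∀ i ≤ d, ∀ j ≤ d, θ i = θ j → i = j
  hEv_top : (⨆ i ∈ Finset.range (d + 1), Ev i) = ⊤
  hEv_bot : ∀ i, d < i → Ev i = ⊥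
  hEw_eig : ∀ i ≤ d, Ew i = Module.End.eigenspace B (θ' i)
  hEw_ne : ∀ i ≤ d, Ew i ≠ ⊥
  hEw_all : ∀ μ : K, Module.End.eigenspace B μ ≠ ⊥ → ∃ i ≤ d, θ' i = μ
  hθ'_inj : ∀ i ≤ d, ∀ j ≤ d, θ' i = θ' j → i = j
  hEw_top : (⨆ i ∈ Finset.range (d + 1), Ew i) = ⊤
  hEw_bot : ∀ i, d < i → Ew i = ⊥
  hTriB : ∀ i ≤ d, ∀ v ∈ Ev i, B v ∈ Ev (i - 1) ⊔ Ev i ⊔ Ev (i + 1)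
  hTriA : ∀ i ≤ d, ∀ v ∈ Ew i, A v ∈ Ew (i - 1) ⊔ Ew i ⊔ Ew (i + 1)
  hIrr : ∀ W : Submodule K V, (∀ v ∈ W, A v ∈ W) → (∀ v ∈ W, B v ∈ W) →
    W = ⊥ ∨ W = ⊤

/-- The polynomial `τ_i = (λ - θ_0)(λ - θ_1) ⋯ (λ - θ_{i-1})`. -/
noncomputable def tau {K : Type*} [Field K] (θ : ℕ → K) (i : ℕ) : Polynomial K :=
  ∏ k ∈ Finset.range i, (X - C (θ k))

namespace TridiagonalPair

variable {K V : Type*} [Field K] [AddCommGroup V] [Module K V] [FiniteDimensional K V]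
variable (p : TridiagonalPair K V)

/-- `F_i = V*_0 + ... + V*_i`. -/
noncomputable def Fs (i : ℕ) : Submodule K V := ⨆ j ∈ Finset.range (i + 1), p.Ew j

/-- `G_i = V_i + ... + V_d`. -/
noncomputable def Gs (i : ℕ) : Submodule K V := ⨆ j ∈ Finset.Icc i p.d, p.Ev j

lemma Ew_le_Fs {i j : ℕ} (h : j ≤ i) : p.Ew j ≤ p.Fs i :=
  le_iSup₂_of_le j (Finset.mem_range.mpr (Nat.lt_succ_of_le h)) le_rfl

lemma Ev_le_Gs {i j : ℕ} (h : i ≤ j) : p.Ev j ≤ p.Gs i := by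
  by_cases hd : j ≤ p.d
  · exact le_iSup₂_of_le j (Finset.mem_Icc.mpr ⟨h, hd⟩) le_rfl
  · rw [p.hEv_bot j (by omega)]; exact bot_le

lemma Fs_mono {i j : ℕ} (h : i ≤ j) : p.Fs i ≤ p.Fs j :=
  iSup₂_le fun k hk => p.Ew_le_Fs (by simp only [Finset.mem_range] at hk; omega)

lemma Gs_anti {i j : ℕ} (h : i ≤ j) : p.Gs j ≤ p.Gs i :=
  iSup₂_le fun k hk => p.Ev_le_Gs (by simp only [Finset.mem_Icc] at hk; omega)

lemma Fs_zero : p.Fs 0 = p.Ew 0 := by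
  simp [Fs]

lemma Gs_zero : p.Gs 0 = ⊤ := by
  have h : Finset.Icc 0 p.d = Finset.range (p.d + 1) := by
    ext x; simp [Nat.lt_succ_iff]
  rw [Gs, h, p.hEv_top]

lemma Gs_bot {i : ℕ} (h : p.d < i) : p.Gs i = ⊥ := by
  rw [Gs, Finset.Icc_eq_empty (by omega)]
  simp

lemma A_mem_Fs {i : ℕ} {v : V} (hv : v ∈ p.Fs i) : p.A v ∈ p.Fs (i + 1) := by
  have hle : p.Fs i ≤ (p.Fs (i + 1)).comap p.A := by
    refine iSup₂_le fun j hj => ?_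
    rw [Finset.mem_range, Nat.lt_succ_iff] at hj
    by_cases hd : j ≤ p.d
    · intro w hw
      exact Submodule.mem_comap.mpr
        ((sup_le (sup_le (p.Ew_le_Fs (by omega)) (p.Ew_le_Fs (by omega)))
          (p.Ew_le_Fs (by omega))) (p.hTriA j hd w hw))
    · rw [p.hEw_bot j (by omega)]; exact bot_le
  exact hle hv

lemma Bsub_mem_Fs {i : ℕ} (hi : i ≤ p.d) {v : V} (hv : v ∈ p.Fs i) :
    p.B v - p.θ' i • v ∈ p.Fs (i - 1) := by
  have hle : p.Fs i ≤ (p.Fs (i - 1)).comap (p.B - p.θ' i • (1 : Module.End K V)) := by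
    refine iSup₂_le fun j hj => ?_
    rw [Finset.mem_range, Nat.lt_succ_iff] at hj
    intro w hw
    have hwe : p.B w = p.θ' j • w :=
      Module.End.mem_eigenspace_iff.mp ((p.hEw_eig j (le_trans hj hi)) ▸ hw)
    refine Submodule.mem_comap.mpr ?_
    have h2 : (p.B - p.θ' i • (1 : Module.End K V)) w = (p.θ' j - p.θ' i) • w := by
      simp [LinearMap.sub_apply, hwe, sub_smul]
    rw [h2]
    by_cases hji : j = i
    · subst hji; simp
    · exact Submodule.smul_mem _ _ (p.Ew_le_Fs (by omega) hw)
  simpa using hle hv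

lemma Asub_mem_Gs {i : ℕ} {v : V} (hv : v ∈ p.Gs i) :
    p.A v - p.θ i • v ∈ p.Gs (i + 1) := by
  have hle : p.Gs i ≤ (p.Gs (i + 1)).comap (p.A - p.θ i • (1 : Module.End K V)) := by
    refine iSup₂_le fun j hj => ?_
    rw [Finset.mem_Icc] at hj
    intro w hw
    have hwe : p.A w = p.θ j • w :=
      Module.End.mem_eigenspace_iff.mp ((p.hEv_eig j hj.2) ▸ hw)
    refine Submodule.mem_comap.mpr ?_
    have h2 : (p.A - p.θ i • (1 : Module.End K V)) w = (p.θ j - p.θ i) • w := by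
      simp [LinearMap.sub_apply, hwe, sub_smul]
    rw [h2]
    by_cases hji : j = i
    · subst hji; simp
    · exact Submodule.smul_mem _ _ (p.Ev_le_Gs (by omega) hw)
  simpa using hle hv

lemma B_mem_Gs {i : ℕ} {v : V} (hv : v ∈ p.Gs (i + 1)) : p.B v ∈ p.Gs i := by
  have hle : p.Gs (i + 1) ≤ (p.Gs i).comap p.B := by
    refine iSup₂_le fun j hj => ?_
    rw [Finset.mem_Icc] at hj
    intro w hw
    exact Submodule.mem_comap.mpr
      ((sup_le (sup_le (p.Ev_le_Gs (by omega)) (p.Ev_le_Gs (by omega)))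
        (p.Ev_le_Gs (by omega))) (p.hTriB j hj.2 w hw))
  exact hle hv

lemma key (i : ℕ) : p.Fs i ⊓ p.Gs (i + 1) = ⊥ := by
  by_cases hid : i < p.d
  swap
  · rw [p.Gs_bot (by omega)]; simp
  set W : Submodule K V := ⨆ j ∈ Finset.range (p.d + 1), (p.Fs j ⊓ p.Gs (j + 1)) with hW
  have hterm : ∀ j ≤ p.d, p.Fs j ⊓ p.Gs (j + 1) ≤ W := fun j hj =>
    le_iSup₂_of_le j (Finset.mem_range.mpr (by omega)) le_rfl
  have hA : ∀ v ∈ W, p.A v ∈ W := by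
    intro v hv
    have hle : W ≤ W.comap p.A := by
      refine iSup₂_le fun j hj => ?_
      rw [Finset.mem_range, Nat.lt_succ_iff] at hj
      rintro w ⟨hwF, hwG⟩
      refine Submodule.mem_comap.mpr ?_
      by_cases hjd : j < p.d
      · have hAw : p.A w = (p.A w - p.θ (j + 1) • w) + p.θ (j + 1) • w := by abel
        rw [hAw]
        refine Submodule.add_mem _ ?_
          (hterm j (by omega) ⟨Submodule.smul_mem _ _ hwF, Submodule.smul_mem _ _ hwG⟩)
        refine hterm (j + 1) (by omega) ⟨?_, p.Asub_mem_Gs hwG⟩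
        exact Submodule.sub_mem _ (p.A_mem_Fs hwF)
          (p.Fs_mono (Nat.le_succ j) (Submodule.smul_mem _ _ hwF))
      · have hj' : j = p.d := by omega
        have : w ∈ (⊥ : Submodule K V) := by
          rw [← p.Gs_bot (show p.d < j + 1 by omega)]; exact hwG
        rw [Submodule.mem_bot] at this
        rw [this, map_zero]
        exact Submodule.zero_mem W
    exact hle hv
  have hB : ∀ v ∈ W, p.B v ∈ W := by
    intro v hv
    have hle : W ≤ W.comap p.B := by
      refine iSup₂_le fun j hj => ?_
      rw [Finset.mem_range, Nat.lt_succ_iff] at hj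
      rintro w ⟨hwF, hwG⟩
      refine Submodule.mem_comap.mpr ?_
      have hBw : p.B w = (p.B w - p.θ' j • w) + p.θ' j • w := by abel
      rw [hBw]
      refine Submodule.add_mem _ ?_
        (hterm j hj ⟨Submodule.smul_mem _ _ hwF, Submodule.smul_mem _ _ hwG⟩)
      by_cases hj0 : j = 0
      · subst hj0
        have hwe : p.B w = p.θ' 0 • w := by
          have : w ∈ p.Ew 0 := by rw [← p.Fs_zero]; exact hwF
          exact Module.End.mem_eigenspace_iff.mp ((p.hEw_eig 0 (by omega)) ▸ this)
        rw [hwe, sub_self]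
        exact Submodule.zero_mem W
      · have h1 : p.B w - p.θ' j • w ∈ p.Fs (j - 1) := p.Bsub_mem_Fs hj hwF
        have h2 : p.B w - p.θ' j • w ∈ p.Gs j := by
          refine Submodule.sub_mem _ (p.B_mem_Gs hwG) (p.Gs_anti (Nat.le_succ j)
            (Submodule.smul_mem _ _ hwG))
        have hj1 : j - 1 + 1 = j := by omega
        refine hterm (j - 1) (by omega) ⟨h1, ?_⟩
        rw [hj1]; exact h2
    exact hle hv
  have hWG1 : W ≤ p.Gs 1 := iSup₂_le fun j hj =>
    inf_le_right.trans (p.Gs_anti (by omega))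
  rcases p.hIrr W hA hB with hbot | htop
  · exact le_bot_iff.mp ((hterm i (by omega)).trans hbot.le)
  · exfalso
    have hEv0 : p.Ev 0 ≤ p.Gs 1 := by
      rw [htop] at hWG1
      exact le_trans le_top hWG1
    have hdisj := (Module.End.eigenspaces_iSupIndep p.A) (p.θ 0)
    have hle2 : p.Gs 1 ≤ ⨆ (μ : K) (_ : μ ≠ p.θ 0), Module.End.eigenspace p.A μ := by
      refine iSup₂_le fun j hj => ?_
      rw [Finset.mem_Icc] at hj
      have hne : p.θ j ≠ p.θ 0 := fun h => by
        have := p.hθ_inj j hj.2 0 (by omega) h; omega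
      rw [p.hEv_eig j hj.2]
      exact le_iSup₂_of_le (p.θ j) hne le_rfl
    have : p.Ev 0 = ⊥ := by
      have h1 : p.Ev 0 ≤ Module.End.eigenspace p.A (p.θ 0) := (p.hEv_eig 0 (by omega)).le
      exact disjoint_self.mp ((hdisj.mono_left h1).mono_right (hEv0.trans hle2))
    exact p.hEv_ne 0 (by omega) this

lemma tau_mem_Fs {u : V} (hu : u ∈ p.Ew 0) (i : ℕ) :
    (aeval p.A (tau p.θ i)) u ∈ p.Fs i := by
  induction i with
  | zero => rw [p.Fs_zero]; simpa [tau] using hu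
  | succ i ih =>
    have h : (aeval p.A (tau p.θ (i + 1))) u
        = p.A ((aeval p.A (tau p.θ i)) u) - p.θ i • ((aeval p.A (tau p.θ i)) u) := by
      rw [show tau p.θ (i + 1) = (X - C (p.θ i)) * tau p.θ i by
        rw [tau, Finset.prod_range_succ, mul_comm]; rfl]
      simp [map_mul, map_sub, Module.End.mul_apply, LinearMap.sub_apply,
        Module.algebraMap_end_apply, sub_smul]
    rw [h]
    exact Submodule.sub_mem _ (p.A_mem_Fs ih)
      (p.Fs_mono (Nat.le_succ i) (Submodule.smul_mem _ _ ih))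

lemma tau_mem_Gs (u : V) (i : ℕ) :
    (aeval p.A (tau p.θ i)) u ∈ p.Gs i := by
  induction i with
  | zero => rw [p.Gs_zero]; trivial
  | succ i ih =>
    have h : (aeval p.A (tau p.θ (i + 1))) u
        = p.A ((aeval p.A (tau p.θ i)) u) - p.θ i • ((aeval p.A (tau p.θ i)) u) := by
      rw [show tau p.θ (i + 1) = (X - C (p.θ i)) * tau p.θ i by
        rw [tau, Finset.prod_range_succ, mul_comm]; rfl]
      simp [map_mul, map_sub, Module.End.mul_apply, LinearMap.sub_apply,
        Module.algebraMap_end_apply, sub_smul]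
    rw [h]
    exact p.Asub_mem_Gs ih

end TridiagonalPair

/-- Suppose `X = Σ_{i=0}^d α_i τ_i(A)` satisfies `X V*_0 ⊆ V*_d`, and let
`u ∈ V*_0` be nonzero.  Then for `0 ≤ i ≤ d - 1`:
`α_i (θ*_i - θ*_d) τ_i(A) u + α_{i+1} (A* - θ*_{i+1} I) τ_{i+1}(A) u = 0`. -/
theorem stmt10 {K V : Type*} [Field K] [AddCommGroup V] [Module K V]
    [FiniteDimensional K V] (hpos : 0 < Module.finrank K V)
    (p : TridiagonalPair K V)
    (α : ℕ → K) (X : Module.End K V)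
    (hX : X = ∑ i ∈ Finset.range (p.d + 1), α i • (aeval p.A (tau p.θ i)))
    (hXV : ∀ v ∈ p.Ew 0, X v ∈ p.Ew p.d)
    (u : V) (hu : u ∈ p.Ew 0) (hu0 : u ≠ 0) :
    ∀ i < p.d,
      (α i * (p.θ' i - p.θ' p.d)) • (aeval p.A (tau p.θ i)) u +
        α (i + 1) • (p.B - p.θ' (i + 1) • (1 : Module.End K V))
          ((aeval p.A (tau p.θ (i + 1))) u) = 0 := by
  intro i hid
  set T : ℕ → V := fun j => (aeval p.A (tau p.θ j)) u with hT
  set S : ℕ → V := fun j =>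
    (α j * (p.θ' j - p.θ' p.d)) • T j +
      α (j + 1) • (p.B - p.θ' (j + 1) • (1 : Module.End K V)) (T (j + 1)) with hS
  have happ : ∀ (c : K) (w : V), (p.B - c • (1 : Module.End K V)) w = p.B w - c • w := by
    intro c w; simp [LinearMap.sub_apply]
  have hTF : ∀ j, T j ∈ p.Fs j := fun j => p.tau_mem_Fs hu j
  have hTG : ∀ j, T j ∈ p.Gs j := fun j => p.tau_mem_Gs u j
  have hSG : ∀ j, S j ∈ p.Gs j := by
    intro j
    refine Submodule.add_mem _ (Submodule.smul_mem _ _ (hTG j)) (Submodule.smul_mem _ _ ?_)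
    rw [happ]
    exact Submodule.sub_mem _ (p.B_mem_Gs (hTG (j + 1)))
      (p.Gs_anti (Nat.le_succ j) (Submodule.smul_mem _ _ (hTG (j + 1))))
  have hSF : ∀ j < p.d, S j ∈ p.Fs j := by
    intro j hj
    refine Submodule.add_mem _ (Submodule.smul_mem _ _ (hTF j)) (Submodule.smul_mem _ _ ?_)
    rw [happ]
    have := p.Bsub_mem_Fs (show j + 1 ≤ p.d by omega) (hTF (j + 1))
    simpa using this
  -- the sum of the brackets is (B - θ'_d) X u = 0
  have hT0 : T 0 = u := by simp [hT, tau]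
  have hXu : X u = ∑ j ∈ Finset.range (p.d + 1), α j • T j := by
    rw [hX]
    simp [LinearMap.sum_apply, hT]
  have hBXu : p.B (X u) = p.θ' p.d • (X u) :=
    Module.End.mem_eigenspace_iff.mp ((p.hEw_eig p.d le_rfl) ▸ hXV u hu)
  have hBu : p.B u = p.θ' 0 • u :=
    Module.End.mem_eigenspace_iff.mp ((p.hEw_eig 0 (Nat.zero_le _)) ▸ hu)
  have hsum0 : ∑ j ∈ Finset.range p.d, S j = 0 := by
    have hSfg : ∀ j, S j = ((α j * (p.θ' j - p.θ' p.d)) • T j) +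
        (α (j + 1) • (p.B (T (j + 1)) - p.θ' (j + 1) • T (j + 1))) := by
      intro j; rw [hS]; simp [happ]
    calc ∑ j ∈ Finset.range p.d, S j
        = (∑ j ∈ Finset.range p.d, (α j * (p.θ' j - p.θ' p.d)) • T j) +
          ∑ j ∈ Finset.range p.d, α (j + 1) • (p.B (T (j + 1)) - p.θ' (j + 1) • T (j + 1)) := by
          rw [← Finset.sum_add_distrib]
          exact Finset.sum_congr rfl fun j _ => hSfg j
      _ = (∑ j ∈ Finset.range (p.d + 1), (α j * (p.θ' j - p.θ' p.d)) • T j) +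
          ∑ j ∈ Finset.range (p.d + 1), α j • (p.B (T j) - p.θ' j • T j) := by
          rw [Finset.sum_range_succ, Finset.sum_range_succ']
          rw [hT0, hBu]
          simp
      _ = ∑ j ∈ Finset.range (p.d + 1), α j • (p.B (T j) - p.θ' p.d • T j) := by
          rw [← Finset.sum_add_distrib]
          refine Finset.sum_congr rfl fun j _ => ?_
          module
      _ = p.B (X u) - p.θ' p.d • (X u) := by
          rw [hXu, map_sum, Finset.smul_sum, ← Finset.sum_sub_distrib]
          refine Finset.sum_congr rfl fun j _ => ?_
          rw [map_smul, smul_sub, smul_comm]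
      _ = 0 := by rw [hBXu, sub_self]
  have hP : ∀ k, ∑ j ∈ Finset.Ico k p.d, S j = 0 := by
    intro k
    induction k with
    | zero => rw [← Finset.range_eq_Ico]; exact hsum0
    | succ k ih =>
      by_cases hk : k < p.d
      · rw [Finset.sum_eq_sum_Ico_succ_bot hk] at ih
        have hrest : ∑ j ∈ Finset.Ico (k + 1) p.d, S j ∈ p.Gs (k + 1) := by
          refine Submodule.sum_mem _ fun j hj => ?_
          rw [Finset.mem_Ico] at hj
          exact p.Gs_anti hj.1 (hSG j)
        have hSk : S k ∈ p.Fs k ⊓ p.Gs (k + 1) := by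
          refine ⟨hSF k hk, ?_⟩
          have : S k = -∑ j ∈ Finset.Ico (k + 1) p.d, S j := by
            rw [eq_neg_iff_add_eq_zero]; exact ih
          rw [this]
          exact Submodule.neg_mem _ hrest
        have hSk0 : S k = 0 := by
          have := p.key k ▸ hSk
          simpa using this
        rw [hSk0, zero_add] at ih
        exact ih
      · rw [Finset.Ico_eq_empty (by omega), Finset.sum_empty]
  have h1 := hP i
  rw [Finset.sum_eq_sum_Ico_succ_bot hid, hP (i + 1), add_zero] at h1
  exact h1
end

section
/- Let (A, A*) be a tridiagonal pair on V with eigenspace orderings V_0, ..., V_d of A and V*_0, ..., V*_d of A*, and let D denote the subalgebra of End(V) generated by A. If there exists a nonzero X ∈ D such that X V*_0 ⊆ V*_d, then every eigenspace V_i of A and every eigenspace V*_i of A* has dimension 1 over K; that is, (A, A*) is a Leonard pair. -/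
/-!
Take `0 ≠ v ∈ V*_0` and `w_i = τ_i(A) v`. The spaces
`U_i = (V*_0 + ⋯ + V*_i) ∩ (V_i + ⋯ + V_d)` form a direct sum (a sum of such intersections is
invariant under `A` and `A*`, so irreducibility kills it), `w_i ∈ U_i`, `(A - θ_i) w_i = w_{i+1}`
and `(A* - θ*_i) w_i ∈ U_{i-1}`. Writing `X = ∑ c_i τ_i(A)` and comparing `U`-components of
`(A* - θ*_d) X v = 0` gives `c_{i+1} (A* - θ*_{i+1}) w_{i+1} = c_i (θ*_d - θ*_i) w_i`. Since
`X ≠ 0` and `V*_d ∩ (V_1 + ⋯ + V_d) = 0` force `c_0 ≠ 0`, every `c_i` is nonzero, so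
`span {w_0, …, w_d}` is invariant under `A` and `A*`, hence is `V`. Thus `dim V ≤ d + 1`, and
the `d + 1` nonzero independent eigenspaces of `A` (or of `A*`) are all lines.
-/

open Polynomial

open Module.End Finset

section Flags

variable {K V : Type*} [Field K] [AddCommGroup V] [Module K V] (E : ℕ → Submodule K V)

def sumBelow (n : ℕ) : Submodule K V := ⨆ h < n, E h

def sumFrom (n : ℕ) : Submodule K V := ⨆ h ≥ n, E h

theorem le_sumBelow {h n : ℕ} (hh : h < n) : E h ≤ sumBelow E n :=
  le_iSup₂ (f := fun h (_ : h < n) => E h) h hh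

theorem le_sumFrom {h n : ℕ} (hh : n ≤ h) : E h ≤ sumFrom E n :=
  le_iSup₂ (f := fun h (_ : h ≥ n) => E h) h hh

theorem sumBelow_mono : Monotone (sumBelow E) := fun _ _ hmn =>
  iSup₂_le fun _ hh => le_sumBelow E (lt_of_lt_of_le hh hmn)

theorem sumFrom_antitone : Antitone (sumFrom E) := fun _ _ hmn =>
  iSup₂_le fun _ hh => le_sumFrom E (hmn.trans hh)

@[simp]
theorem sumBelow_zero : sumBelow E 0 = ⊥ := by
  simp [sumBelow]

theorem sumBelow_succ (n : ℕ) : sumBelow E (n + 1) = sumBelow E n ⊔ E n := by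
  refine le_antisymm (iSup₂_le fun h hh => ?_)
    (sup_le (sumBelow_mono E n.le_succ) (le_sumBelow E n.lt_succ_self))
  rcases (Nat.lt_succ_iff.mp hh).lt_or_eq with hlt | rfl
  · exact le_sup_of_le_left (le_sumBelow E hlt)
  · exact le_sup_right

variable {E}

theorem iSupIndep.disjoint_sumBelow (hE : iSupIndep E) (n : ℕ) :
    Disjoint (E n) (sumBelow E n) :=
  hE.disjoint_biSup (y := Set.Iio n) (lt_irrefl n)

theorem iSupIndep.disjoint_sumFrom (hE : iSupIndep E) {m n : ℕ} (h : m < n) :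
    Disjoint (E m) (sumFrom E n) :=
  hE.disjoint_biSup (y := Set.Ici n) (not_le.mpr h)

theorem finrank_sumBelow [FiniteDimensional K V] (hE : iSupIndep E) (n : ℕ) :
    Module.finrank K (sumBelow E n) = ∑ i ∈ range n, Module.finrank K (E i) := by
  induction n with
  | zero => simp
  | succ n ih =>
    have h := Submodule.finrank_sup_add_finrank_inf_eq (sumBelow E n) (E n)
    rw [(hE.disjoint_sumBelow n).symm.eq_bot, finrank_bot, add_zero] at h
    rw [sumBelow_succ, h, ih, sum_range_succ]

variable {T : Module.End K V} {θ : ℕ → K}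

theorem sub_smul_mem_sumBelow (hT : ∀ h, ∀ u ∈ E h, T u = θ h • u) (n : ℕ) {u : V}
    (hu : u ∈ sumBelow E (n + 1)) : T u - θ n • u ∈ sumBelow E n := by
  suffices sumBelow E (n + 1) ≤ (sumBelow E n).comap (T - θ n • 1) by simpa using this hu
  refine iSup₂_le fun h hh x hx => ?_
  rw [Submodule.mem_comap, LinearMap.sub_apply, LinearMap.smul_apply, one_apply, hT h x hx,
    ← sub_smul]
  rcases (Nat.lt_succ_iff.mp hh).lt_or_eq with hlt | rfl
  · exact Submodule.smul_mem _ _ (le_sumBelow E hlt hx)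
  · simp

theorem sub_smul_mem_sumFrom (hT : ∀ h, ∀ u ∈ E h, T u = θ h • u) (n : ℕ) {u : V}
    (hu : u ∈ sumFrom E n) : T u - θ n • u ∈ sumFrom E (n + 1) := by
  suffices sumFrom E n ≤ (sumFrom E (n + 1)).comap (T - θ n • 1) by simpa using this hu
  refine iSup₂_le fun h hh x hx => ?_
  rw [Submodule.mem_comap, LinearMap.sub_apply, LinearMap.smul_apply, one_apply, hT h x hx,
    ← sub_smul]
  rcases (show n ≤ h from hh).lt_or_eq with hlt | rfl
  · exact Submodule.smul_mem _ _ (le_sumFrom E hlt hx)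
  · simp

theorem apply_mem_sumBelow_succ (hT : ∀ h, ∀ u ∈ E h, T u ∈ E (h - 1) ⊔ E h ⊔ E (h + 1))
    {n : ℕ} {u : V} (hu : u ∈ sumBelow E n) : T u ∈ sumBelow E (n + 1) := by
  suffices sumBelow E n ≤ (sumBelow E (n + 1)).comap T from this hu
  refine iSup₂_le fun h hh x hx => ?_
  exact sup_le (sup_le (le_sumBelow E (by omega)) (le_sumBelow E (by omega)))
    (le_sumBelow E (by omega)) (hT h x hx)

theorem apply_mem_sumFrom (hT : ∀ h, ∀ u ∈ E h, T u ∈ E (h - 1) ⊔ E h ⊔ E (h + 1))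
    {n : ℕ} {u : V} (hu : u ∈ sumFrom E (n + 1)) : T u ∈ sumFrom E n := by
  suffices sumFrom E (n + 1) ≤ (sumFrom E n).comap T from this hu
  refine iSup₂_le fun h (hh : n + 1 ≤ h) x hx => ?_
  exact sup_le (sup_le (le_sumFrom E (by omega)) (le_sumFrom E (by omega)))
    (le_sumFrom E (by omega)) (hT h x hx)

end Flags

section Tau

variable {K : Type*} [Field K]

theorem tau_succ (θ : ℕ → K) (n : ℕ) : tau θ (n + 1) = tau θ n * (X - C (θ n)) :=
  prod_range_succ _ _

theorem ker_aeval_tau {V : Type*} [AddCommGroup V] [Module K V] (T : Module.End K V)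
    (θ : ℕ → K) (n : ℕ) (hθ : Set.InjOn θ (Set.Iio n)) :
    LinearMap.ker (aeval T (tau θ n)) = sumBelow (fun k => eigenspace T (θ k)) n := by
  induction n with
  | zero => simp [tau, Module.End.one_eq_id]
  | succ n ih =>
    have hcop : IsCoprime (tau θ n) (X - C (θ n)) :=
      IsCoprime.prod_left fun k hk => isCoprime_X_sub_C_of_isUnit_sub <| Ne.isUnit <|
        sub_ne_zero.mpr fun h =>
          (mem_range.mp hk).ne (hθ (Set.mem_Iio.mpr (by simp at hk; omega)) (by simp) h)
    rw [tau_succ, ← sup_ker_aeval_eq_ker_aeval_mul_of_coprime _ hcop,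
      ih (hθ.mono fun k hk => by simp at hk ⊢; omega), sumBelow_succ, eigenspace_def]
    simp [Algebra.algebraMap_eq_smul_one]

theorem exists_eq_sum_tau_of_mem_adjoin {A : Type*} [Ring A] [Algebra K A] {a : A} {θ : ℕ → K}
    {n : ℕ} (ha : aeval a (tau θ (n + 1)) = 0) {x : A} (hx : x ∈ Algebra.adjoin K {a}) :
    ∃ c : ℕ → K, x = ∑ i ∈ range (n + 1), c i • aeval a (tau θ i) := by
  set S := Submodule.span K ((fun i => aeval a (tau θ i)) '' ↑(range (n + 1)))
  have hgen : ∀ i < n + 1, aeval a (tau θ i) ∈ S := fun i hi =>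
    Submodule.subset_span ⟨i, mem_range.mpr hi, rfl⟩
  have hmul : ∀ y ∈ S, a * y ∈ S := by
    intro y hy
    induction hy using Submodule.span_induction with
    | mem _ hy =>
      obtain ⟨i, hi, rfl⟩ := hy
      have hstep :
          a * aeval a (tau θ i) = aeval a (tau θ (i + 1)) + θ i • aeval a (tau θ i) := by
        rw [tau_succ, mul_comm, aeval_mul]
        simp [sub_mul, Algebra.smul_def]
      rw [hstep]
      refine add_mem ?_ (Submodule.smul_mem _ _ (hgen i (mem_range.mp hi)))
      rcases (Nat.lt_succ_iff.mp (mem_range.mp hi)).lt_or_eq with hlt | rfl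
      · exact hgen (i + 1) (by omega)
      · rw [ha]; exact zero_mem _
    | zero => simp
    | add _ _ _ _ h₁ h₂ => rw [mul_add]; exact add_mem h₁ h₂
    | smul r _ _ h => rw [mul_smul_comm]; exact Submodule.smul_mem _ r h
  rw [Algebra.adjoin_singleton_eq_range_aeval] at hx
  obtain ⟨q, rfl⟩ := hx
  have hq : aeval a q ∈ S := by
    induction q using Polynomial.induction_on with
    | C r =>
      simpa [tau, Algebra.algebraMap_eq_smul_one] using Submodule.smul_mem S r (hgen 0 (by omega))
    | add _ _ h₁ h₂ => rw [map_add]; exact add_mem h₁ h₂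
    | monomial k r h =>
      rw [pow_succ', mul_left_comm, aeval_mul, aeval_X]
      exact hmul _ h
  obtain ⟨c, hc⟩ := (Submodule.mem_span_image_finset_iff_exists_fun' K).mp hq
  exact ⟨c, hc.symm⟩

end Tau

namespace TridiagonalPair

variable {K V : Type*} [Field K] [AddCommGroup V] [Module K V] [FiniteDimensional K V]
  (p : TridiagonalPair K V)

def swap : TridiagonalPair K V where
  A := p.B
  B := p.A
  d := p.d
  Ev := p.Ew
  Ew := p.Ev
  θ := p.θ'
  θ' := p.θ
  hEv_eig := p.hEw_eig
  hEv_ne := p.hEw_ne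
  hEv_all := p.hEw_all
  hθ_inj := p.hθ'_inj
  hEv_top := p.hEw_top
  hEv_bot := p.hEw_bot
  hEw_eig := p.hEv_eig
  hEw_ne := p.hEv_ne
  hEw_all := p.hEv_all
  hθ'_inj := p.hθ_inj
  hEw_top := p.hEv_top
  hEw_bot := p.hEv_bot
  hTriB := p.hTriA
  hTriA := p.hTriB
  hIrr W hA hB := p.hIrr W hB hA

theorem A_apply_of_mem_Ev : ∀ h, ∀ u ∈ p.Ev h, p.A u = p.θ h • u := by
  intro h u hu
  rcases le_or_gt h p.d with hh | hh
  · exact mem_eigenspace_iff.mp (p.hEv_eig h hh ▸ hu)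
  · simp [(Submodule.mem_bot K).mp (p.hEv_bot h hh ▸ hu)]

theorem B_apply_mem_of_mem_Ev :
    ∀ h, ∀ u ∈ p.Ev h, p.B u ∈ p.Ev (h - 1) ⊔ p.Ev h ⊔ p.Ev (h + 1) := by
  intro h u hu
  rcases le_or_gt h p.d with hh | hh
  · exact p.hTriB h hh u hu
  · simp [(Submodule.mem_bot K).mp (p.hEv_bot h hh ▸ hu)]

theorem B_apply_of_mem_Ew : ∀ h, ∀ u ∈ p.Ew h, p.B u = p.θ' h • u :=
  p.swap.A_apply_of_mem_Ev

theorem iSupIndep_Ev : iSupIndep p.Ev := by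
  intro i
  rcases le_or_gt i p.d with hi | hi
  · rw [p.hEv_eig i hi]
    refine (eigenspaces_iSupIndep p.A (p.θ i)).mono_right (iSup₂_le fun j hj => ?_)
    rcases le_or_gt j p.d with hj' | hj'
    · rw [p.hEv_eig j hj']
      exact le_iSup₂ (f := fun μ (_ : μ ≠ p.θ i) => eigenspace p.A μ) (p.θ j)
        fun e => hj (p.hθ_inj j hj' i hi e)
    · simp [p.hEv_bot j hj']
  · simp [p.hEv_bot i hi]

theorem sumBelow_Ev_succ_d : sumBelow p.Ev (p.d + 1) = ⊤ := by
  rw [eq_top_iff, ← p.hEv_top]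
  exact iSup₂_le fun h hh => le_sumBelow _ (mem_range.mp hh)

theorem sumFrom_Ev_zero : sumFrom p.Ev 0 = ⊤ := by
  rw [eq_top_iff, ← p.hEv_top]
  exact iSup₂_le fun h _ => le_sumFrom _ h.zero_le

theorem sumFrom_Ev_succ_d : sumFrom p.Ev (p.d + 1) = ⊥ :=
  eq_bot_iff.mpr <| iSup₂_le fun h hh => (p.hEv_bot h hh).le

/-- `⨆ t, F t ⊓ G t` is invariant under `A` and `B` and lies in `G 1`. -/
theorem disjoint_of_raising_lowering (F G : ℕ → Submodule K V) (a b : ℕ → K)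
    (hF0 : F 0 = ⊥) (hF : Monotone F) (hFA : ∀ t, ∀ u ∈ F t, p.A u ∈ F (t + 1))
    (hFB : ∀ t, ∀ u ∈ F (t + 1), p.B u - b t • u ∈ F t)
    (hG : Antitone G) (hGA : ∀ t, ∀ u ∈ G t, p.A u - a t • u ∈ G (t + 1))
    (hGB : ∀ t, ∀ u ∈ G (t + 1), p.B u ∈ G t) (hG1 : G 1 ≠ ⊤) (t : ℕ) :
    Disjoint (F t) (G t) := by
  set W := ⨆ t, F t ⊓ G t
  have hAW : W ≤ W.comap p.A := iSup_le fun t u ⟨huF, huG⟩ => by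
    have hraise : p.A u - a t • u ∈ F (t + 1) ⊓ G (t + 1) :=
      ⟨sub_mem (hFA t u huF) (hF t.le_succ (Submodule.smul_mem _ _ huF)), hGA t u huG⟩
    simpa using add_mem (le_iSup (fun t => F t ⊓ G t) (t + 1) hraise)
      (Submodule.smul_mem _ (a t) (le_iSup (fun t => F t ⊓ G t) t ⟨huF, huG⟩))
  have hBW : W ≤ W.comap p.B := iSup_le fun t u ⟨huF, huG⟩ => by
    cases t with
    | zero => simp [(Submodule.mem_bot K).mp (hF0 ▸ huF)]
    | succ t =>
      have hlower : p.B u - b t • u ∈ F t ⊓ G t :=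
        ⟨hFB t u huF, sub_mem (hGB t u huG) (hG t.le_succ (Submodule.smul_mem _ _ huG))⟩
      simpa using add_mem (le_iSup (fun t => F t ⊓ G t) t hlower)
        (Submodule.smul_mem _ (b t) (le_iSup (fun t => F t ⊓ G t) (t + 1) ⟨huF, huG⟩))
  have hWG : W ≤ G 1 := iSup_le fun t => by
    cases t with
    | zero => simp [hF0]
    | succ t => exact inf_le_right.trans (hG (Nat.succ_le_succ t.zero_le))
  have hW : W = ⊥ := (p.hIrr W (fun u hu => hAW hu) (fun u hu => hBW hu)).resolve_right
    fun htop => hG1 (eq_top_iff.mpr (htop ▸ hWG))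
  exact disjoint_iff.mpr (eq_bot_iff.mpr (hW ▸ le_iSup (fun t => F t ⊓ G t) t))

theorem sumFrom_Ev_one_ne_top : sumFrom p.Ev 1 ≠ ⊤ := fun h =>
  p.hEv_ne 0 p.d.zero_le (disjoint_top.mp (h ▸ p.iSupIndep_Ev.disjoint_sumFrom one_pos))

theorem sumBelow_Ev_d_ne_top : sumBelow p.Ev p.d ≠ ⊤ := fun h =>
  p.hEv_ne p.d le_rfl (disjoint_top.mp (h ▸ p.iSupIndep_Ev.disjoint_sumBelow p.d))

theorem disjoint_sumBelow_Ew_sumFrom_Ev (t : ℕ) : Disjoint (sumBelow p.Ew t) (sumFrom p.Ev t) :=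
  p.disjoint_of_raising_lowering _ _ p.θ p.θ' (sumBelow_zero _) (sumBelow_mono _)
    (fun _ _ => apply_mem_sumBelow_succ p.swap.B_apply_mem_of_mem_Ev)
    (fun t _ => sub_smul_mem_sumBelow p.swap.A_apply_of_mem_Ev t)
    (sumFrom_antitone _) (fun t _ => sub_smul_mem_sumFrom p.A_apply_of_mem_Ev t)
    (fun _ _ => apply_mem_sumFrom p.B_apply_mem_of_mem_Ev) p.sumFrom_Ev_one_ne_top t

-- The argument above with the `V_i` in reverse order: `G t = V_0 + ⋯ + V_{d-t}`.
theorem disjoint_Ew_zero_sumBelow_Ev : Disjoint (p.Ew 0) (sumBelow p.Ev p.d) := by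
  have h := p.disjoint_of_raising_lowering (sumBelow p.Ew) (fun t => sumBelow p.Ev (p.d + 1 - t))
    (fun t => p.θ (p.d - t)) p.θ' (sumBelow_zero _) (sumBelow_mono _)
    (fun _ _ => apply_mem_sumBelow_succ p.swap.B_apply_mem_of_mem_Ev)
    (fun t _ => sub_smul_mem_sumBelow p.swap.A_apply_of_mem_Ev t)
    (fun s t hst => sumBelow_mono _ (by omega))
    (fun t u hu => by
      simpa [show p.d + 1 - (t + 1) = p.d - t by omega] using
        sub_smul_mem_sumBelow p.A_apply_of_mem_Ev (p.d - t) (sumBelow_mono _ (by omega) hu))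
    (fun t u (hu : u ∈ sumBelow p.Ev (p.d + 1 - (t + 1))) => by
      rcases le_or_gt t p.d with ht | ht
      · have h := apply_mem_sumBelow_succ p.B_apply_mem_of_mem_Ev hu
        rwa [show p.d + 1 - (t + 1) + 1 = p.d + 1 - t by omega] at h
      · simp [show p.d + 1 - (t + 1) = 0 by omega] at hu
        simp [hu])
    (by simpa using p.sumBelow_Ev_d_ne_top) 1
  simpa using h.mono_left (le_sumBelow p.Ew one_pos)

-- The argument above with the `V*_i` in reverse order: `F t = V*_{d+1-t} + ⋯ + V*_d`.
theorem disjoint_Ew_d_sumFrom_Ev_one : Disjoint (p.Ew p.d) (sumFrom p.Ev 1) := by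
  have h := p.disjoint_of_raising_lowering (fun t => sumFrom p.Ew (p.d + 1 - t)) (sumFrom p.Ev)
    p.θ (fun t => p.θ' (p.d - t)) p.swap.sumFrom_Ev_succ_d
    (fun s t hst => sumFrom_antitone _ (by omega))
    (fun t u hu => by
      rcases le_or_gt t p.d with ht | ht
      · rw [show p.d + 1 - t = p.d + 1 - (t + 1) + 1 by omega] at hu
        exact apply_mem_sumFrom p.swap.B_apply_mem_of_mem_Ev hu
      · rw [show p.d + 1 - (t + 1) = 0 by omega,
          show sumFrom p.Ew 0 = ⊤ from p.swap.sumFrom_Ev_zero]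
        trivial)
    (fun t u (hu : u ∈ sumFrom p.Ew (p.d + 1 - (t + 1))) => sumFrom_antitone _ (by omega)
      (sub_smul_mem_sumFrom p.swap.A_apply_of_mem_Ev (p.d - t)
        (by rwa [show p.d + 1 - (t + 1) = p.d - t by omega] at hu)))
    (sumFrom_antitone _) (fun t _ => sub_smul_mem_sumFrom p.A_apply_of_mem_Ev t)
    (fun _ _ => apply_mem_sumFrom p.B_apply_mem_of_mem_Ev) p.sumFrom_Ev_one_ne_top 1
  exact h.mono_left (le_sumFrom p.Ew (by omega))

def split (i : ℕ) : Submodule K V := sumBelow p.Ew (i + 1) ⊓ sumFrom p.Ev i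

theorem sub_smul_mem_split {i : ℕ} {u : V} (hu : u ∈ p.split i) :
    p.A u - p.θ i • u ∈ p.split (i + 1) :=
  ⟨sub_mem (apply_mem_sumBelow_succ p.swap.B_apply_mem_of_mem_Ev hu.1)
      (sumBelow_mono _ (i + 1).le_succ (Submodule.smul_mem _ _ hu.1)),
    sub_smul_mem_sumFrom p.A_apply_of_mem_Ev i hu.2⟩

theorem B_sub_smul_mem_split {i : ℕ} {u : V} (hu : u ∈ p.split (i + 1)) :
    p.B u - p.θ' (i + 1) • u ∈ p.split i :=
  ⟨sub_smul_mem_sumBelow p.swap.A_apply_of_mem_Ev (i + 1) hu.1,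
    sub_mem (apply_mem_sumFrom p.B_apply_mem_of_mem_Ev hu.2)
      (sumFrom_antitone _ i.le_succ (Submodule.smul_mem _ _ hu.2))⟩

theorem eq_zero_of_sum_eq_zero_of_mem_split (g : ℕ → V) (hg : ∀ i, g i ∈ p.split i)
    (n : ℕ) (hsum : ∑ i ∈ range (n + 1), g i = 0) : ∀ i ≤ n, g i = 0 := by
  induction n with
  | zero => intro i hi; simpa [Nat.le_zero.mp hi] using hsum
  | succ n ih =>
    rw [sum_range_succ] at hsum
    have hbelow : g (n + 1) ∈ sumBelow p.Ew (n + 1) := by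
      rw [eq_neg_of_add_eq_zero_right hsum]
      exact neg_mem (sum_mem fun i hi => sumBelow_mono _ (mem_range.mp hi) (hg i).1)
    have hlast : g (n + 1) = 0 :=
      Submodule.disjoint_def.mp (p.disjoint_sumBelow_Ew_sumFrom_Ev (n + 1)) _ hbelow (hg _).2
    intro i hi
    rcases hi.lt_or_eq with hi | rfl
    · exact ih (by rwa [hlast, add_zero] at hsum) i (Nat.lt_succ_iff.mp hi)
    · exact hlast

theorem ker_aeval_tau_A {n : ℕ} (hn : n ≤ p.d + 1) :
    LinearMap.ker (aeval p.A (tau p.θ n)) = sumBelow p.Ev n := by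
  rw [ker_aeval_tau _ _ _ fun i hi j hj =>
    p.hθ_inj i (by simp at hi; omega) j (by simp at hj; omega)]
  exact iSup_congr fun k => iSup_congr fun hk => (p.hEv_eig k (by omega)).symm

theorem aeval_tau_d_succ : aeval p.A (tau p.θ (p.d + 1)) = 0 :=
  LinearMap.ker_eq_top.mp (by rw [p.ker_aeval_tau_A le_rfl, p.sumBelow_Ev_succ_d])

noncomputable def tauVec (v : V) (i : ℕ) : V := aeval p.A (tau p.θ i) v

variable {p} {v : V}

theorem tauVec_zero : p.tauVec v 0 = v := by
  simp [tauVec, tau]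

theorem tauVec_succ (i : ℕ) :
    p.tauVec v (i + 1) = p.A (p.tauVec v i) - p.θ i • p.tauVec v i := by
  simp [tauVec, tau_succ, mul_comm (tau p.θ i), Algebra.algebraMap_eq_smul_one]

theorem tauVec_d_succ : p.tauVec v (p.d + 1) = 0 := by
  simp [tauVec, p.aeval_tau_d_succ]

theorem tauVec_mem_split (hv : v ∈ p.Ew 0) (i : ℕ) : p.tauVec v i ∈ p.split i := by
  induction i with
  | zero =>
    exact ⟨tauVec_zero (p := p) ▸ le_sumBelow p.Ew one_pos hv, by simp [p.sumFrom_Ev_zero]⟩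
  | succ i ih => rw [tauVec_succ]; exact p.sub_smul_mem_split ih

theorem tauVec_ne_zero (hv : v ∈ p.Ew 0) (hv0 : v ≠ 0) {i : ℕ} (hi : i ≤ p.d) :
    p.tauVec v i ≠ 0 := fun h => by
  have hker : v ∈ LinearMap.ker (aeval p.A (tau p.θ i)) := h
  rw [p.ker_aeval_tau_A (by omega)] at hker
  exact hv0 (Submodule.disjoint_def.mp p.disjoint_Ew_zero_sumBelow_Ev v hv
    (sumBelow_mono _ hi hker))

/-- Comparing the `split`-components of `(A* - θ*_d) X v = 0` for `X v = ∑ c_i τ_i(A) v`. -/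
theorem smul_lowering_eq (hv : v ∈ p.Ew 0) (c : ℕ → K)
    (hc : ∑ i ∈ range (p.d + 1), c i • p.tauVec v i ∈ p.Ew p.d) {j : ℕ} (hj : j ≤ p.d) :
    c (j + 1) • (p.B (p.tauVec v (j + 1)) - p.θ' (j + 1) • p.tauVec v (j + 1)) =
      (c j * (p.θ' p.d - p.θ' j)) • p.tauVec v j := by
  set w := p.tauVec v
  set l := fun i => p.B (w i) - p.θ' i • w i
  have hshift : ∑ i ∈ range (p.d + 1), c (i + 1) • l (i + 1) =
      ∑ i ∈ range (p.d + 1), c i • l i := by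
    have h := sum_range_succ' (fun i => c i • l i) (p.d + 1)
    rw [sum_range_succ, show l 0 = 0 by simp [l, w, tauVec_zero, p.B_apply_of_mem_Ew 0 v hv],
      show l (p.d + 1) = 0 by simp [l, w, tauVec_d_succ]] at h
    simpa using h.symm
  have hsum : ∑ i ∈ range (p.d + 1),
      (c (i + 1) • l (i + 1) - (c i * (p.θ' p.d - p.θ' i)) • w i) = 0 := by
    rw [sum_sub_distrib, hshift, ← sub_eq_zero.mpr (p.B_apply_of_mem_Ew p.d _ hc)]
    simp only [l, map_sum, map_smul, smul_sum, ← sum_sub_distrib]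
    exact sum_congr rfl fun i _ => by module
  have hmem :
      ∀ i, c (i + 1) • l (i + 1) - (c i * (p.θ' p.d - p.θ' i)) • w i ∈ p.split i :=
    fun i => sub_mem (Submodule.smul_mem _ _ (p.B_sub_smul_mem_split (tauVec_mem_split hv _)))
      (Submodule.smul_mem _ _ (tauVec_mem_split hv i))
  exact sub_eq_zero.mp (p.eq_zero_of_sum_eq_zero_of_mem_split _ hmem p.d hsum j hj)

theorem coeff_ne_zero_of_sum_mem_Ew (hv : v ∈ p.Ew 0) (hv0 : v ≠ 0) (c : ℕ → K)
    (hc : ∑ i ∈ range (p.d + 1), c i • p.tauVec v i ∈ p.Ew p.d)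
    (hne : ∃ i ≤ p.d, c i ≠ 0) :
    ∀ j ≤ p.d, c j ≠ 0 := by
  have hc0 : c 0 ≠ 0 := by
    intro h0
    have hfrom : ∑ i ∈ range (p.d + 1), c i • p.tauVec v i ∈ sumFrom p.Ev 1 := by
      rw [sum_range_succ', h0, zero_smul, add_zero]
      exact sum_mem fun i _ => Submodule.smul_mem _ _
        (sumFrom_antitone _ (by omega) (tauVec_mem_split hv (i + 1)).2)
    obtain ⟨i, hi, hci⟩ := hne
    have h := p.eq_zero_of_sum_eq_zero_of_mem_split _
      (fun i => Submodule.smul_mem _ (c i) (tauVec_mem_split hv i)) p.d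
      (Submodule.disjoint_def.mp p.disjoint_Ew_d_sumFrom_Ev_one _ hc hfrom) i hi
    exact (smul_eq_zero.mp h).elim hci (tauVec_ne_zero hv hv0 hi)
  intro j
  induction j with
  | zero => exact fun _ => hc0
  | succ j ih =>
    intro hj hcj
    have h := smul_lowering_eq hv c hc (j := j) (by omega)
    rw [hcj, zero_smul, eq_comm, smul_eq_zero, mul_eq_zero, sub_eq_zero] at h
    rcases h with (h | h) | h
    · exact ih (by omega) h
    · exact absurd (p.hθ'_inj _ le_rfl _ (by omega) h) (by omega)
    · exact tauVec_ne_zero hv hv0 (by omega) h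

theorem finrank_le_of_lowering (hv : v ∈ p.Ew 0) (hv0 : v ≠ 0)
    (hl : ∀ j < p.d, ∃ r : K,
      p.B (p.tauVec v (j + 1)) - p.θ' (j + 1) • p.tauVec v (j + 1) = r • p.tauVec v j) :
    Module.finrank K V ≤ p.d + 1 := by
  set W := Submodule.span K (Set.range fun i : Fin (p.d + 1) => p.tauVec v i)
  have hmem : ∀ i ≤ p.d, p.tauVec v i ∈ W := fun i hi =>
    Submodule.subset_span ⟨⟨i, by omega⟩, rfl⟩
  have hA : W ≤ W.comap p.A := by
    refine Submodule.span_le.mpr (Set.range_subset_iff.mpr fun ⟨i, hi⟩ => ?_)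
    show p.A (p.tauVec v i) ∈ W
    rw [← sub_add_cancel (p.A _) (p.θ i • p.tauVec v i), ← tauVec_succ]
    refine add_mem ?_ (Submodule.smul_mem _ _ (hmem i (by omega)))
    rcases (Nat.lt_succ_iff.mp hi).lt_or_eq with hi | rfl
    · exact hmem (i + 1) hi
    · rw [tauVec_d_succ]; exact zero_mem _
  have hB : W ≤ W.comap p.B := by
    refine Submodule.span_le.mpr (Set.range_subset_iff.mpr fun ⟨i, hi⟩ => ?_)
    show p.B (p.tauVec v i) ∈ W
    rw [← sub_add_cancel (p.B _) (p.θ' i • p.tauVec v i)]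
    refine add_mem ?_ (Submodule.smul_mem _ _ (hmem i (by omega)))
    cases i with
    | zero => simp [tauVec_zero, p.B_apply_of_mem_Ew 0 v hv]
    | succ j =>
      obtain ⟨r, hr⟩ := hl j (by omega)
      exact hr ▸ Submodule.smul_mem _ r (hmem j (by omega))
  have hW : W = ⊤ := (p.hIrr W (fun u hu => hA hu) (fun u hu => hB hu)).resolve_left fun h =>
    hv0 (by simpa [h, tauVec_zero] using hmem 0 p.d.zero_le)
  calc Module.finrank K V = Module.finrank K W := by rw [hW, finrank_top]
    _ ≤ Fintype.card (Fin (p.d + 1)) := finrank_range_le_card (R := K) _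
    _ = p.d + 1 := Fintype.card_fin _

variable (p)

theorem finrank_Ev_eq_one (h : Module.finrank K V ≤ p.d + 1) {i : ℕ} (hi : i ≤ p.d) :
    Module.finrank K (p.Ev i) = 1 := by
  have hpos : ∀ j ∈ range (p.d + 1), 1 ≤ Module.finrank K (p.Ev j) := fun j hj =>
    Submodule.one_le_finrank_iff.mpr (p.hEv_ne j (Nat.lt_succ_iff.mp (mem_range.mp hj)))
  have hsum :
      ∑ j ∈ range (p.d + 1), Module.finrank K (p.Ev j) ≤ ∑ j ∈ range (p.d + 1), 1 := by
    rw [← finrank_sumBelow p.iSupIndep_Ev]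
    simpa using (Submodule.finrank_le _).trans h
  exact ((sum_eq_sum_iff_of_le hpos).mp ((sum_le_sum hpos).antisymm hsum) i
    (mem_range.mpr (Nat.lt_succ_of_le hi))).symm

end TridiagonalPair

theorem stmt11_general {K V : Type*} [Field K] [AddCommGroup V] [Module K V]
    [FiniteDimensional K V]
    (p : TridiagonalPair K V)
    (X : Module.End K V) (hX : X ∈ Algebra.adjoin K {p.A}) (hX0 : X ≠ 0)
    (hXV : ∀ v ∈ p.Ew 0, X v ∈ p.Ew p.d) :
    ∀ i ≤ p.d, Module.finrank K (p.Ev i) = 1 ∧ Module.finrank K (p.Ew i) = 1 := by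
  obtain ⟨c, rfl⟩ := exists_eq_sum_tau_of_mem_adjoin p.aeval_tau_d_succ hX
  obtain ⟨v, hv, hv0⟩ := Submodule.exists_mem_ne_zero_of_ne_bot (p.hEw_ne 0 p.d.zero_le)
  have hc : ∑ i ∈ range (p.d + 1), c i • p.tauVec v i ∈ p.Ew p.d := by
    simpa [TridiagonalPair.tauVec] using hXV v hv
  have hne : ∃ i ≤ p.d, c i ≠ 0 := by
    contrapose! hX0
    exact sum_eq_zero fun i hi => by rw [hX0 i (Nat.lt_succ_iff.mp (mem_range.mp hi)), zero_smul]
  have hcoeff := TridiagonalPair.coeff_ne_zero_of_sum_mem_Ew hv hv0 c hc hne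
  have hfin := TridiagonalPair.finrank_le_of_lowering hv hv0 fun j hj =>
    ⟨(c (j + 1))⁻¹ * (c j * (p.θ' p.d - p.θ' j)), by
      rw [← smul_smul, ← TridiagonalPair.smul_lowering_eq hv c hc hj.le, smul_smul,
        inv_mul_cancel₀ (hcoeff (j + 1) hj), one_smul]⟩
  exact fun i hi => ⟨p.finrank_Ev_eq_one hfin hi, p.swap.finrank_Ev_eq_one hfin hi⟩

/-- If there exists a nonzero `X ∈ D` with `X V*_0 ⊆ V*_d`, then every
eigenspace `V_i` of `A` and every eigenspace `V*_i` of `A*` has dimension `1`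
over `K`; that is, `(A, A*)` is a Leonard pair. -/
theorem stmt11 {K V : Type*} [Field K] [AddCommGroup V] [Module K V]
    [FiniteDimensional K V] (hpos : 0 < Module.finrank K V)
    (p : TridiagonalPair K V)
    (X : Module.End K V) (hX : X ∈ Algebra.adjoin K {p.A}) (hX0 : X ≠ 0)
    (hXV : ∀ v ∈ p.Ew 0, X v ∈ p.Ew p.d) :
    ∀ i ≤ p.d, Module.finrank K (p.Ev i) = 1 ∧ Module.finrank K (p.Ew i) = 1 :=
  stmt11_general p X hX hX0 hXV
end

section
/- Let (A, A*) be a tridiagonal pair on V with eigenspace orderings V_0, ..., V_d of A and V*_0, ..., V*_d of A*. Suppose every eigenspace V_i of A and every eigenspace V*_i of A* has dimension 1 over K (that is, (A, A*) is a Leonard pair). Then there exists a nonzero element X of the subalgebra D of End(V) generated by A such that X V*_0 ⊆ V*_d. -/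
open Polynomial

lemma span_eq_of_finrank_one {K V : Type*} [Field K] [AddCommGroup V] [Module K V]
    [FiniteDimensional K V] {W : Submodule K V} (h : Module.finrank K W = 1)
    {v : V} (hv : v ∈ W) (h0 : v ≠ 0) : W = Submodule.span K {v} := by
  have hle : Submodule.span K {v} ≤ W := by
    rw [Submodule.span_le, Set.singleton_subset_iff]; exact hv
  have h1 : Module.finrank K (Submodule.span K {v}) = 1 := finrank_span_singleton h0
  exact (Submodule.eq_of_le_of_finrank_le hle (by rw [h1, h])).symm

lemma tp_aeval_sum {K V : Type*} [Field K] [AddCommGroup V] [Module K V]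
    [FiniteDimensional K V] (p : TridiagonalPair K V) (f : K[X])
    (c : ∀ i, p.Ev i) :
    (Polynomial.aeval p.A f) (∑ i ∈ Finset.range (p.d + 1), (c i : V)) =
      ∑ i ∈ Finset.range (p.d + 1), f.eval (p.θ i) • (c i : V) := by
  rw [map_sum]
  refine Finset.sum_congr rfl fun i hi => ?_
  have hid : i ≤ p.d := Nat.lt_succ_iff.mp (Finset.mem_range.mp hi)
  rcases eq_or_ne ((c i : V)) 0 with h | h
  · simp [h]
  · have hev : p.A.HasEigenvector (p.θ i) (c i) :=
      ⟨show _ ∈ Module.End.eigenspace p.A (p.θ i) from p.hEv_eig i hid ▸ (c i).2, h⟩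
    exact Module.End.aeval_apply_of_hasEigenvector hev

/-- If every eigenspace of `A` and of `A*` has dimension `1` (that is,
`(A, A*)` is a Leonard pair), then there exists a nonzero `X` in the
subalgebra `D` generated by `A` such that `X V*_0 ⊆ V*_d`. -/
theorem stmt15 {K V : Type*} [Field K] [AddCommGroup V] [Module K V]
    [FiniteDimensional K V] (hpos : 0 < Module.finrank K V)
    (p : TridiagonalPair K V)
    (hdim : ∀ i ≤ p.d, Module.finrank K (p.Ev i) = 1 ∧
      Module.finrank K (p.Ew i) = 1) :
    ∃ X : Module.End K V, X ∈ Algebra.adjoin K {p.A} ∧ X ≠ 0 ∧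
      ∀ v ∈ p.Ew 0, X v ∈ p.Ew p.d := by
  classical
  set s := Finset.range (p.d + 1) with hs
  obtain ⟨v0, hv0m, hv0⟩ := (Submodule.ne_bot_iff _).mp (p.hEw_ne 0 (Nat.zero_le _))
  obtain ⟨w, hwm, hw⟩ := (Submodule.ne_bot_iff _).mp (p.hEw_ne p.d le_rfl)
  have hv0top : v0 ∈ ⨆ i ∈ s, p.Ev i := by rw [p.hEv_top]; trivial
  have hwtop : w ∈ ⨆ i ∈ s, p.Ev i := by rw [p.hEv_top]; trivial
  obtain ⟨c, hc⟩ := (Submodule.mem_iSup_finset_iff_exists_sum _ _).mp hv0top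
  obtain ⟨b, hb⟩ := (Submodule.mem_iSup_finset_iff_exists_sum _ _).mp hwtop
  have hθinj : Set.InjOn p.θ s := fun i hi j hj hij =>
    p.hθ_inj i (Nat.lt_succ_iff.mp (Finset.mem_range.mp hi)) j
      (Nat.lt_succ_iff.mp (Finset.mem_range.mp hj)) hij
  have hEw0span : p.Ew 0 = Submodule.span K {v0} :=
    span_eq_of_finrank_one (hdim 0 (Nat.zero_le _)).2 hv0m hv0
  -- generic finisher
  have finish : ∀ f : Polynomial K, Polynomial.aeval p.A f ≠ 0 →
      (Polynomial.aeval p.A f) v0 ∈ p.Ew p.d →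
      ∃ X : Module.End K V, X ∈ Algebra.adjoin K {p.A} ∧ X ≠ 0 ∧
        ∀ v ∈ p.Ew 0, X v ∈ p.Ew p.d := by
    intro f hXne hXv0
    refine ⟨Polynomial.aeval p.A f, ?_, hXne, ?_⟩
    · rw [Algebra.adjoin_singleton_eq_range_aeval]; exact ⟨f, rfl⟩
    · intro v hv
      rw [hEw0span, Submodule.mem_span_singleton] at hv
      obtain ⟨k, rfl⟩ := hv
      rw [map_smul]
      exact Submodule.smul_mem _ _ hXv0
  by_cases hall : ∀ i ∈ s, (c i : V) ≠ 0
  · -- all components nonzero; interpolate to hit w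
    have hr : ∀ i ∈ s, ∃ a : K, a • (c i : V) = (b i : V) := by
      intro i hi
      have hid : i ≤ p.d := Nat.lt_succ_iff.mp (Finset.mem_range.mp hi)
      have hspan : p.Ev i = Submodule.span K {(c i : V)} :=
        span_eq_of_finrank_one (hdim i hid).1 (c i).2 (hall i hi)
      have : (b i : V) ∈ Submodule.span K {(c i : V)} := hspan ▸ (b i).2
      exact Submodule.mem_span_singleton.mp this
    set r : ℕ → K := fun i => if h : i ∈ s then (hr i h).choose else 0 with hrdef
    have hrspec : ∀ i ∈ s, r i • (c i : V) = (b i : V) := by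
      intro i hi
      simp only [hrdef, dif_pos hi]
      exact (hr i hi).choose_spec
    set f := Lagrange.interpolate s p.θ r with hf
    have hXv0 : (Polynomial.aeval p.A f) v0 = w := by
      rw [← hc, tp_aeval_sum, ← hb]
      refine Finset.sum_congr rfl fun i hi => ?_
      rw [hf, Lagrange.eval_interpolate_at_node r hθinj hi, hrspec i hi]
    refine finish f ?_ (by rw [hXv0]; exact hwm)
    intro h0
    exact hw (by rw [← hXv0, h0]; rfl)
  · -- some component vanishes
    push_neg at hall
    obtain ⟨j, hjs, hj0⟩ := hall
    have hjd : j ≤ p.d := Nat.lt_succ_iff.mp (Finset.mem_range.mp hjs)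
    set f := Lagrange.interpolate s p.θ (fun i => if i = j then 1 else 0) with hf
    have hXv0 : (Polynomial.aeval p.A f) v0 = 0 := by
      rw [← hc, tp_aeval_sum]
      refine Finset.sum_eq_zero fun i hi => ?_
      rw [hf, Lagrange.eval_interpolate_at_node _ hθinj hi]
      by_cases hij : i = j
      · subst hij; rw [hj0, smul_zero]
      · simp [hij]
    refine finish f ?_ (by rw [hXv0]; exact Submodule.zero_mem _)
    obtain ⟨u, hum, hu⟩ := (Submodule.ne_bot_iff _).mp (p.hEv_ne j hjd)
    have hev : p.A.HasEigenvector (p.θ j) u := ⟨show _ ∈ Module.End.eigenspace p.A (p.θ j) from p.hEv_eig j hjd ▸ hum, hu⟩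
    intro h0
    have : (Polynomial.aeval p.A f) u = u := by
      rw [Module.End.aeval_apply_of_hasEigenvector hev, hf,
        Lagrange.eval_interpolate_at_node _ hθinj hjs]
      simp
    rw [h0] at this
    exact hu (by simpa using this.symm)
end
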